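/- arXiv:math/0607170 — 3 statements merged into one kernel-verified Lean document; each statement's English description precedes it below -/
import Mathlib

section
/- Suppose Z is a finitely generated commutative ℂ-algebra, R is an associative unital Z-algebra that is free of finite rank as a Z-module with finite Z-basis ℬ, and Φ : R → Z is a Z-linear map satisfying the Hypothesis with respect to ℬ. Then the map θ_Φ : R → Hom_Z(R, Z), θ_Φ(a)(a') = Φ(a'·a), is bijective; in particular, R is a free Frobenius extension of Z. -/
/-- Let `Z` be a finitely generated commutative `ℂ`-algebra, `R` an
associative unital `Z`-algebra, free of finite rank as a `Z`-module with finite basis `ℬ`,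
and `Φ : R → Z` a `Z`-linear map satisfying the Hypothesis with respect to `ℬ`:
for every nonzero `a = Σ z_b • b` there are `x ∈ R`, a basis index `i` with `z_i ≠ 0`,
and a unit `u ∈ Zˣ` with `Φ (x * a) = u * z_i`.  Then the map
`θ_Φ : R → Hom_Z(R, Z)`, `θ_Φ a a' = Φ (a' * a)`, is bijective; in particular `R` is a
free Frobenius extension of `Z`. -/
theorem rational_cherednik_style_frobenius_criterion
    {Z R : Type*} [CommRing Z] [Algebra ℂ Z] [Algebra.FiniteType ℂ Z]
    [Ring R] [Algebra Z R] {ι : Type*} [Fintype ι] (ℬ : Module.Basis ι Z R)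
    (Φ : R →ₗ[Z] Z)
    (hΦ : ∀ a : R, a ≠ 0 → ∃ (x : R) (i : ι) (u : Zˣ),
      ℬ.repr a i ≠ 0 ∧ Φ (x * a) = (u : Z) * ℬ.repr a i) :
    Function.Bijective (fun a : R => Φ ∘ₗ LinearMap.mulRight Z a) := by
  classical
  set M : Matrix ι ι Z := Matrix.of fun i j => Φ (ℬ i * ℬ j) with hMdef
  -- θ as a linear map
  set T : R →ₗ[Z] (R →ₗ[Z] Z) :=
    { toFun := fun a => Φ ∘ₗ LinearMap.mulRight Z a
      map_add' := by intro a b; ext x; simp [mul_add]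
      map_smul' := by intro c a; ext x; simp [mul_smul_comm] } with hT
  -- Key: det M is a unit
  have hM : IsUnit M.det := by
    by_contra hdet
    obtain ⟨m, hmax, hle⟩ := Ideal.exists_le_maximal (Ideal.span {M.det})
      (by simpa [Ideal.span_singleton_eq_top] using hdet)
    haveI : m.IsMaximal := hmax
    letI : Field (Z ⧸ m) := Ideal.Quotient.field m
    set f : Z →+* Z ⧸ m := Ideal.Quotient.mk m with hf
    have hdm : M.det ∈ m := hle (Ideal.subset_span rfl)
    have hdet0 : (M.map ⇑f).det = 0 := by
      have h := (RingHom.map_det f M).symm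
      rw [show (M.map ⇑f) = f.mapMatrix M from rfl, h]
      exact (Ideal.Quotient.eq_zero_iff_mem).2 hdm
    obtain ⟨v, hv0, hv⟩ := (Matrix.exists_mulVec_eq_zero_iff).2 hdet0
    choose zf hzf using fun i => Ideal.Quotient.mk_surjective (v i)
    set z : ι → Z := fun i => if v i = 0 then 0 else zf i with hz
    have hfz : ∀ i, f (z i) = v i := by
      intro i
      by_cases h : v i = 0 <;> simp [hz, h, hzf i, hf]
    set a : R := ∑ i, z i • ℬ i with ha
    have hrepr : ∀ i, ℬ.repr a i = z i := by
      intro i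
      simp [ha, map_sum, Finsupp.single_apply]
    have ha0 : a ≠ 0 := by
      obtain ⟨i, hi⟩ := Function.ne_iff.1 hv0
      intro h
      apply hi
      rw [← hfz i, ← hrepr i, h]
      simp
    obtain ⟨x, i, u, hzi, hΦx⟩ := hΦ a ha0
    rw [hrepr] at hzi hΦx
    have hvi : v i ≠ 0 := by
      intro h
      exact hzi (by simp [hz, h])
    -- compute Φ (x * a)
    have h1 : Φ (x * a) = ∑ j, z j * Φ (x * ℬ j) := by
      rw [ha, Finset.mul_sum, map_sum]
      refine Finset.sum_congr rfl fun j _ => ?_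
      rw [mul_smul_comm, map_smul, smul_eq_mul]
    have h2 : ∀ j, Φ (x * ℬ j) = ∑ i', ℬ.repr x i' * M i' j := by
      intro j
      conv_lhs => rw [← ℬ.sum_repr x]
      rw [Finset.sum_mul, map_sum]
      refine Finset.sum_congr rfl fun i' _ => ?_
      rw [smul_mul_assoc, map_smul, smul_eq_mul]
      rfl
    have h0 : f (Φ (x * a)) = 0 := by
      rw [h1, map_sum]
      have step : ∀ j, f (z j * Φ (x * ℬ j))
          = v j * ∑ i', f (ℬ.repr x i') * (M.map f) i' j := by
        intro j
        rw [map_mul, hfz, h2 j, map_sum]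
        simp only [map_mul, Matrix.map_apply]
      rw [Finset.sum_congr rfl (fun j _ => step j)]
      have : ∑ j, v j * ∑ i', f (ℬ.repr x i') * (M.map f) i' j
          = ∑ i', f (ℬ.repr x i') * ((M.map f).mulVec v i') := by
        simp only [Matrix.mulVec, dotProduct, Finset.mul_sum]
        rw [Finset.sum_comm]
        exact Finset.sum_congr rfl fun i' _ => Finset.sum_congr rfl fun j _ => by ring
      rw [this, hv]
      simp
    rw [hΦx, map_mul, hfz] at h0
    rcases mul_eq_zero.1 h0 with h | h
    · exact ((u.isUnit.map f).ne_zero) h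
    · exact hvi h
  -- conclude bijectivity
  have hTM : LinearMap.toMatrix ℬ ℬ.dualBasis T = M := by
    ext i j
    rw [LinearMap.toMatrix_apply, Module.Basis.dualBasis_repr]
    rfl
  exact (LinearEquiv.ofIsUnitDet (f := T) (v := ℬ) (v' := ℬ.dualBasis)
    (by rw [hTM]; exact hM)).bijective
end

section
/- Let Z be a commutative ring, R an associative unital Z-algebra that is free of finite rank as a Z-module with finite Z-basis ℬ, and Φ : R → Z a Z-linear map satisfying the Hypothesis with respect to ℬ. Then for every maximal ideal m of Z and every a ∈ R such that Φ(x·a) ∈ m for all x ∈ R, one has a ∈ m·R. -/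
lemma aux_mem_smul_top_iff
    {Z R : Type*} [CommRing Z] [Ring R] [Algebra Z R]
    {ι : Type*} (ℬ : Module.Basis ι Z R) (m : Ideal Z) (b : R) :
    b ∈ (m • ⊤ : Submodule Z R) ↔ ∀ i, ℬ.repr b i ∈ m := by
  constructor
  · intro hb i
    refine Submodule.smul_induction_on hb ?_ ?_
    · intro z hz x _
      simpa using Ideal.mul_mem_right _ _ hz
    · intro x y hx hy
      simpa using Ideal.add_mem _ hx hy
  · intro h
    have := ℬ.linearCombination_repr b
    rw [← this]
    rw [Finsupp.linearCombination_apply, Finsupp.sum]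
    refine Submodule.sum_mem _ fun i _ => ?_
    exact Submodule.smul_mem_smul (h i) trivial

/-- Let `Z` be a commutative ring, `R` an associative unital `Z`-algebra
that is free of finite rank as a `Z`-module with finite basis `ℬ`, and `Φ : R → Z` a
`Z`-linear map satisfying the Hypothesis with respect to `ℬ`.  Then for every maximal
ideal `m` of `Z` and every `a ∈ R` such that `Φ (x * a) ∈ m` for all `x ∈ R`, we have
`a ∈ m • R`. -/
theorem mem_maximalIdeal_smul_of_form_vanishes_mod
    {Z R : Type*} [CommRing Z] [Ring R] [Algebra Z R]
    {ι : Type*} [Fintype ι] (ℬ : Module.Basis ι Z R)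
    (Φ : R →ₗ[Z] Z)
    (hΦ : ∀ a : R, a ≠ 0 → ∃ (x : R) (i : ι) (u : Zˣ),
      ℬ.repr a i ≠ 0 ∧ Φ (x * a) = (u : Z) * ℬ.repr a i)
    (m : Ideal Z) (hm : m.IsMaximal) (a : R)
    (ha : ∀ x : R, Φ (x * a) ∈ m) :
    a ∈ (m • ⊤ : Submodule Z R) := by
  classical
  -- split a into the part with coordinates outside m and the rest
  set a' : R := ∑ i ∈ Finset.univ.filter (fun i => ℬ.repr a i ∉ m),
      ℬ.repr a i • ℬ i with ha'def
  have hrepr : ∀ j, ℬ.repr a' j = if ℬ.repr a j ∉ m then ℬ.repr a j else 0 := by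
    intro j
    rw [ha'def, map_sum]
    simp only [map_smul, ℬ.repr_self, Finsupp.smul_single, smul_eq_mul, mul_one]
    rw [Finset.sum_apply']
    simp only [Finsupp.single_apply]
    rw [Finset.sum_filter, Finset.sum_eq_single j]
    · simp
    · intro i _ hij; simp [hij]
    · simp
  -- a - a' ∈ m • ⊤
  have hdiff : a - a' ∈ (m • ⊤ : Submodule Z R) := by
    rw [aux_mem_smul_top_iff ℬ]
    intro j
    rw [map_sub, Finsupp.sub_apply, hrepr j]
    by_cases h : ℬ.repr a j ∉ m
    · simp [h]
    · push_neg at h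
      rw [if_neg (not_not.mpr h), sub_zero]; exact h
  -- m • ⊤ is stable under left multiplication
  have hstable : ∀ x : R, ∀ b ∈ (m • ⊤ : Submodule Z R), x * b ∈ (m • ⊤ : Submodule Z R) := by
    intro x b hb
    refine Submodule.smul_induction_on hb ?_ ?_
    · intro z hz y _
      rw [mul_smul_comm]
      exact Submodule.smul_mem_smul hz trivial
    · intro y y' hy hy'
      rw [mul_add]; exact Submodule.add_mem _ hy hy'
  -- Φ(x * a') ∈ m for all x
  have ha' : ∀ x : R, Φ (x * a') ∈ m := by
    intro x
    have h1 : Φ (x * (a - a')) ∈ m := by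
      refine Submodule.smul_induction_on (hstable x _ hdiff) ?_ ?_
      · intro z hz y _
        rw [map_smul, smul_eq_mul]
        exact Ideal.mul_mem_right _ _ hz
      · intro y y' hy hy'
        rw [map_add]; exact Ideal.add_mem _ hy hy'
    have : Φ (x * a') = Φ (x * a) - Φ (x * (a - a')) := by
      rw [← map_sub, ← mul_sub, sub_sub_cancel]
    rw [this]
    exact Ideal.sub_mem _ (ha x) h1
  -- a' must be 0
  have ha'0 : a' = 0 := by
    by_contra h0
    obtain ⟨x, i, u, hi, hu⟩ := hΦ a' h0
    have hmem : (u : Z) * ℬ.repr a' i ∈ m := hu ▸ ha' x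
    have : ℬ.repr a' i ∈ m := by
      have := Ideal.mul_mem_left m ((u⁻¹ : Zˣ) : Z) hmem
      rwa [← mul_assoc, Units.inv_mul, one_mul] at this
    rw [hrepr i] at this hi
    by_cases h : ℬ.repr a i ∉ m
    · simp only [h, if_true] at this; exact h this
    · simp [h] at hi
  have := hdiff
  rwa [ha'0, sub_zero] at this
end

section
/- Let Z be a commutative ring and R an associative unital Z-algebra that is free of finite rank as a Z-module. Let 𝔹 : R × R → Z be an associative Z-bilinear form such that both induced Z-linear maps R → Hom_Z(R, Z), namely t ↦ 𝔹(−, t) and r ↦ 𝔹(r, −), are bijective. Then there exists a unique Z-algebra automorphism ν of R (the Nakayama automorphism) such that 𝔹(x, y) = 𝔹(ν(y), x) for all x, y ∈ R. -/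
/-- Let `Z` be a commutative ring and `R` an associative unital
`Z`-algebra, free of finite rank as a `Z`-module.  Let `𝔹 : R × R → Z` be an associative
`Z`-bilinear form such that both induced maps `R → Hom_Z(R, Z)`, `t ↦ 𝔹 (−, t)`
(i.e. `𝔹.flip`) and `r ↦ 𝔹 (r, −)` (i.e. `𝔹`), are bijective.  Then there is a unique
`Z`-algebra automorphism `ν` of `R` (the Nakayama automorphism) with
`𝔹 (x, y) = 𝔹 (ν y, x)` for all `x, y ∈ R`. -/
theorem existsUnique_nakayama_automorphism
    {Z R : Type*} [CommRing Z] [Ring R] [Algebra Z R]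
    [Module.Free Z R] [Module.Finite Z R]
    (B : R →ₗ[Z] R →ₗ[Z] Z)
    (hassoc : ∀ x y z : R, B (x * y) z = B x (y * z))
    (h₁ : Function.Bijective ⇑B.flip)
    (h₂ : Function.Bijective ⇑B) :
    ∃! ν : R ≃ₐ[Z] R, ∀ x y : R, B x y = B (ν y) x := by
  set e := LinearEquiv.ofBijective B h₂ with he
  set ν₀ : R ≃ₗ[Z] R := (LinearEquiv.ofBijective B.flip h₁).trans e.symm with hν₀
  have key : ∀ t x : R, B (ν₀ t) x = B x t := by
    intro t x
    have h : B (ν₀ t) = B.flip t := by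
      show e (e.symm (B.flip t)) = _
      simp
    rw [h]; rfl
  have hone : ν₀ 1 = 1 := by
    apply h₂.1
    ext x
    have h1 := hassoc 1 x 1
    simp only [one_mul, mul_one] at h1
    rw [key, h1]
  have hmul : ∀ y z : R, ν₀ (y * z) = ν₀ y * ν₀ z := by
    intro y z
    apply h₂.1
    ext x
    calc B (ν₀ (y * z)) x = B x (y * z) := key _ _
      _ = B (x * y) z := (hassoc _ _ _).symm
      _ = B (ν₀ z) (x * y) := (key _ _).symm
      _ = B (ν₀ z * x) y := (hassoc _ _ _).symm
      _ = B (ν₀ y) (ν₀ z * x) := (key _ _).symm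
      _ = B (ν₀ y * ν₀ z) x := (hassoc _ _ _).symm
  refine ⟨AlgEquiv.ofLinearEquiv ν₀ hone hmul, fun x y => (key y x).symm, ?_⟩
  intro ν' hν'
  ext y
  have : ν' y = ν₀ y := by
    apply h₂.1
    ext x
    rw [key, ← hν' x y]
  exact this
end
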